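/- Let d ≥ 1, let Ω ⊆ ℝ^d be a nonempty bounded open set, let ε > 0 and 0 < k ≤ 2ε², and fix w ∈ V. Then the standard Crank–Nicolson discrete energy E(u) = (1/2)∫_Ω |(∇u(x) + ∇w(x))/2|² dx + (1/(4k))∫_Ω (u(x) − w(x))² dx + (1/(4ε²))∫_Ω ( F(u(x)) + f(w(x))u(x) ) dx is strictly convex on V: for all u₁, u₂ ∈ V whose restrictions to Ω are not equal and all t ∈ (0,1), E(t u₁ + (1−t) u₂) < t E(u₁) + (1−t) E(u₂). -/

import Mathlib

/-!
The energy density splits into the gradient term `½‖(∇u + ∇w)/2‖²`, which is convex in `u` because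
`∇` is linear and `‖·‖²` is convex, and a scalar potential in the value `s = u(x)`. Writing
`F(s) = s⁴/4 - s²/2 + 1/4`, the potential is `(1/(4k) - 1/(8ε²)) s² + s⁴/(16ε²)` plus an affine
function of `s`; the first coefficient is nonnegative exactly when `k ≤ 2ε²`, so the potential is
strictly convex thanks to the quartic. Integrating, the energy of a convex combination is at most
the combination of the energies, strictly so because `u₁ ≠ u₂` on a nonempty open subset of `Ω`,
which has positive measure.
-/

open MeasureTheory Set

theorem StrictConvexOn.const_mul {E : Type*} [AddCommMonoid E] [Module ℝ E] {s : Set E}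
    {f : E → ℝ} {c : ℝ} (hc : 0 < c) (hf : StrictConvexOn ℝ s f) :
    StrictConvexOn ℝ s fun x => c * f x := by
  refine ⟨hf.1, fun x hx y hy hxy a b ha hb hab => ?_⟩
  have h := mul_lt_mul_of_pos_left (hf.2 hx hy hxy ha hb hab) hc
  simp only [smul_eq_mul] at h ⊢
  linarith

theorem convexOn_univ_affine (c e : ℝ) : ConvexOn ℝ univ fun s : ℝ => c * s + e :=
  ⟨convex_univ, fun x _ y _ a b _ _ hab => le_of_eq <| by
    simp only [smul_eq_mul]; linear_combination (-e) * hab⟩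

theorem setIntegral_lt_convexComb_of_le_of_lt_on_open {X : Type*} [TopologicalSpace X]
    [MeasurableSpace X] [OpensMeasurableSpace X] {μ : Measure X} [μ.IsOpenPosMeasure]
    {s U : Set X} {f g h : X → ℝ} {t : ℝ}
    (hf : IntegrableOn f s μ) (hg : IntegrableOn g s μ) (hh : IntegrableOn h s μ)
    (hle : ∀ x ∈ s, f x ≤ t * g x + (1 - t) * h x)
    (hs : IsOpen s) (hU : IsOpen U) (hsU : (s ∩ U).Nonempty)
    (hlt : ∀ x ∈ s ∩ U, f x < t * g x + (1 - t) * h x) :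
    ∫ x in s, f x ∂μ < t * ∫ x in s, g x ∂μ + (1 - t) * ∫ x in s, h x ∂μ := by
  have hcomb : IntegrableOn (fun x => t * g x + (1 - t) * h x) s μ :=
    (hg.const_mul t).add (hh.const_mul (1 - t))
  rw [← integral_const_mul, ← integral_const_mul, ← integral_add (hg.const_mul t)
    (hh.const_mul (1 - t)), ← sub_pos, ← integral_sub hcomb hf,
    setIntegral_pos_iff_support_of_nonneg_ae
      (ae_restrict_of_forall_mem hs.measurableSet fun x hx => sub_nonneg.2 (hle x hx))
      (hcomb.sub hf)]
  refine lt_of_lt_of_le ((hs.inter hU).measure_pos μ hsU) (measure_mono ?_)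
  intro x hx
  exact ⟨(sub_pos.2 (hlt x hx)).ne', hx.1⟩

theorem Continuous.integrableOn_of_isBounded {X : Type*} [MetricSpace X] [ProperSpace X]
    [MeasurableSpace X] [OpensMeasurableSpace X] {μ : Measure X} [IsFiniteMeasureOnCompacts μ]
    {f : X → ℝ} {s : Set X} (hf : Continuous f) (hs : Bornology.IsBounded s) :
    IntegrableOn f s μ :=
  (hf.continuousOn.integrableOn_compact hs.isCompact_closure).mono_set subset_closure

section CrankNicolson

variable {E : Type*} [NormedAddCommGroup E] [InnerProductSpace ℝ E] [CompleteSpace E]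

theorem gradient_const_mul_add_const_mul {u₁ u₂ : E → ℝ} (hu₁ : Differentiable ℝ u₁)
    (hu₂ : Differentiable ℝ u₂) (a b : ℝ) (x : E) :
    gradient (fun y => a * u₁ y + b * u₂ y) x = a • gradient u₁ x + b • gradient u₂ x := by
  simp only [gradient]
  rw [fderiv_fun_add ((hu₁ x).const_mul a) ((hu₂ x).const_mul b), fderiv_const_mul (hu₁ x),
    fderiv_const_mul (hu₂ x), map_add, map_smul, map_smul]

theorem ContDiff.continuous_gradient {u : E → ℝ} (hu : ContDiff ℝ 1 u) :
    Continuous (gradient u) :=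
  (InnerProductSpace.toDual ℝ E).symm.continuous.comp (hu.continuous_fderiv one_ne_zero)

/-- The Crank–Nicolson potential `(s - w)²/(4k) + (F(s) + f(w) s)/(4ε²)` at the value `s = u(x)`,
given the previous value `w = w(x)`. -/
noncomputable def cnPotential (k ε w s : ℝ) : ℝ :=
  1 / (4 * k) * (s - w) ^ 2 + 1 / (4 * ε ^ 2) * (1 / 4 * (s ^ 2 - 1) ^ 2 + (w ^ 3 - w) * s)

theorem strictConvexOn_cnPotential {k ε : ℝ} (hε : 0 < ε) (hk0 : 0 < k) (hk : k ≤ 2 * ε ^ 2)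
    (w : ℝ) : StrictConvexOn ℝ univ (cnPotential k ε w) := by
  have hcoef : 0 ≤ 1 / (4 * k) - 1 / (8 * ε ^ 2) :=
    sub_nonneg.2 (one_div_le_one_div_of_le (by positivity) (by linarith))
  have hquartic : StrictConvexOn ℝ univ fun s : ℝ => 1 / (16 * ε ^ 2) * s ^ 4 :=
    (Even.strictConvexOn_pow (by decide) four_ne_zero).const_mul (by positivity)
  have hquadratic : ConvexOn ℝ univ fun s : ℝ => (1 / (4 * k) - 1 / (8 * ε ^ 2)) * s ^ 2 :=
    (Even.strictConvexOn_pow even_two two_ne_zero).convexOn.smul hcoef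
  refine ((hquartic.add_convexOn hquadratic).add_convexOn
    (convexOn_univ_affine ((w ^ 3 - w) / (4 * ε ^ 2) - w / (2 * k))
      (w ^ 2 / (4 * k) + 1 / (16 * ε ^ 2)))).congr fun s _ => ?_
  simp only [cnPotential, Pi.add_apply]
  field_simp
  ring

noncomputable def cnEnergyDensity (k ε : ℝ) (w u : E → ℝ) (x : E) : ℝ :=
  1 / 2 * ‖(1 / 2 : ℝ) • (gradient u x + gradient w x)‖ ^ 2 + cnPotential k ε (w x) (u x)

theorem norm_sq_half_gradient_convexComb_le (w : E → ℝ) {u₁ u₂ : E → ℝ}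
    (hu₁ : Differentiable ℝ u₁) (hu₂ : Differentiable ℝ u₂) {t : ℝ} (ht0 : 0 ≤ t) (ht1 : t ≤ 1)
    (x : E) :
    ‖(1 / 2 : ℝ) • (gradient (fun y => t * u₁ y + (1 - t) * u₂ y) x + gradient w x)‖ ^ 2
      ≤ t * ‖(1 / 2 : ℝ) • (gradient u₁ x + gradient w x)‖ ^ 2
        + (1 - t) * ‖(1 / 2 : ℝ) • (gradient u₂ x + gradient w x)‖ ^ 2 := by
  have hconv := ((convexOn_univ_norm (E := E)).pow
    (fun _ _ => norm_nonneg _) 2).2 (mem_univ ((1 / 2 : ℝ) • (gradient u₁ x + gradient w x)))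
    (mem_univ ((1 / 2 : ℝ) • (gradient u₂ x + gradient w x))) ht0 (sub_nonneg.2 ht1)
    (add_sub_cancel t 1)
  have hcomb : (1 / 2 : ℝ) • (t • gradient u₁ x + (1 - t) • gradient u₂ x + gradient w x)
      = t • ((1 / 2 : ℝ) • (gradient u₁ x + gradient w x))
        + (1 - t) • ((1 / 2 : ℝ) • (gradient u₂ x + gradient w x)) := by
    module
  rw [gradient_const_mul_add_const_mul hu₁ hu₂, hcomb]
  exact hconv

theorem cnEnergyDensity_convexComb_le {k ε : ℝ} (hε : 0 < ε) (hk0 : 0 < k)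
    (hk : k ≤ 2 * ε ^ 2) (w : E → ℝ) {u₁ u₂ : E → ℝ} (hu₁ : Differentiable ℝ u₁)
    (hu₂ : Differentiable ℝ u₂) {t : ℝ} (ht0 : 0 ≤ t) (ht1 : t ≤ 1) (x : E) :
    cnEnergyDensity k ε w (fun y => t * u₁ y + (1 - t) * u₂ y) x
      ≤ t * cnEnergyDensity k ε w u₁ x + (1 - t) * cnEnergyDensity k ε w u₂ x := by
  have hgrad := norm_sq_half_gradient_convexComb_le w hu₁ hu₂ ht0 ht1 x
  have hpot := (strictConvexOn_cnPotential hε hk0 hk (w x)).convexOn.2 (mem_univ (u₁ x))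
    (mem_univ (u₂ x)) ht0 (sub_nonneg.2 ht1) (add_sub_cancel t 1)
  simp only [smul_eq_mul] at hpot
  simp only [cnEnergyDensity]
  linarith

theorem cnEnergyDensity_convexComb_lt {k ε : ℝ} (hε : 0 < ε) (hk0 : 0 < k)
    (hk : k ≤ 2 * ε ^ 2) (w : E → ℝ) {u₁ u₂ : E → ℝ} (hu₁ : Differentiable ℝ u₁)
    (hu₂ : Differentiable ℝ u₂) {t : ℝ} (ht0 : 0 < t) (ht1 : t < 1) {x : E}
    (hx : u₁ x ≠ u₂ x) :
    cnEnergyDensity k ε w (fun y => t * u₁ y + (1 - t) * u₂ y) x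
      < t * cnEnergyDensity k ε w u₁ x + (1 - t) * cnEnergyDensity k ε w u₂ x := by
  have hgrad := norm_sq_half_gradient_convexComb_le w hu₁ hu₂ ht0.le ht1.le x
  have hpot := (strictConvexOn_cnPotential hε hk0 hk (w x)).2 (mem_univ (u₁ x))
    (mem_univ (u₂ x)) hx ht0 (sub_pos.2 ht1) (add_sub_cancel t 1)
  simp only [smul_eq_mul] at hpot
  simp only [cnEnergyDensity]
  linarith

theorem continuous_cnEnergyDensity (k ε : ℝ) {w u : E → ℝ} (hw : ContDiff ℝ 1 w)
    (hu : ContDiff ℝ 1 u) : Continuous (cnEnergyDensity k ε w u) := by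
  have hgw := hw.continuous_gradient
  have hgu := hu.continuous_gradient
  have hcw := hw.continuous
  have hcu := hu.continuous
  unfold cnEnergyDensity cnPotential
  fun_prop

theorem setIntegral_cnEnergyDensity [ProperSpace E] [MeasurableSpace E] [BorelSpace E]
    {μ : Measure E} [IsFiniteMeasureOnCompacts μ] {Ω : Set E} (hΩ : Bornology.IsBounded Ω)
    (k ε : ℝ) {w u : E → ℝ} (hw : ContDiff ℝ 1 w) (hu : ContDiff ℝ 1 u) :
    ∫ x in Ω, cnEnergyDensity k ε w u x ∂μ =
      1 / 2 * (∫ x in Ω, ‖(1 / 2 : ℝ) • (gradient u x + gradient w x)‖ ^ 2 ∂μ)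
      + 1 / (4 * k) * (∫ x in Ω, (u x - w x) ^ 2 ∂μ)
      + 1 / (4 * ε ^ 2) * (∫ x in Ω,
          (1 / 4 * ((u x) ^ 2 - 1) ^ 2 + ((w x) ^ 3 - w x) * u x) ∂μ) := by
  have hgw := hw.continuous_gradient
  have hgu := hu.continuous_gradient
  have hcw := hw.continuous
  have hcu := hu.continuous
  have hgrad : IntegrableOn (fun x => ‖(1 / 2 : ℝ) • (gradient u x + gradient w x)‖ ^ 2) Ω μ :=
    Continuous.integrableOn_of_isBounded (by fun_prop) hΩ
  have hdist : IntegrableOn (fun x => (u x - w x) ^ 2) Ω μ :=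
    Continuous.integrableOn_of_isBounded (by fun_prop) hΩ
  have hreact : IntegrableOn
      (fun x => 1 / 4 * ((u x) ^ 2 - 1) ^ 2 + ((w x) ^ 3 - w x) * u x) Ω μ :=
    Continuous.integrableOn_of_isBounded (by fun_prop) hΩ
  have hsplit : cnEnergyDensity k ε w u = fun x =>
      (1 / 2 * ‖(1 / 2 : ℝ) • (gradient u x + gradient w x)‖ ^ 2 + 1 / (4 * k) * (u x - w x) ^ 2)
      + 1 / (4 * ε ^ 2) * (1 / 4 * ((u x) ^ 2 - 1) ^ 2 + ((w x) ^ 3 - w x) * u x) := by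
    funext x
    simp only [cnEnergyDensity, cnPotential, add_assoc]
  rw [hsplit, integral_add (by exact (hgrad.const_mul _).add (hdist.const_mul _))
    (hreact.const_mul _), integral_add (hgrad.const_mul _) (hdist.const_mul _), integral_const_mul,
    integral_const_mul, integral_const_mul]

end CrankNicolson

theorem stmt_13_general (d : ℕ)
    (Ω : Set (EuclideanSpace ℝ (Fin d)))
    (hΩbd : Bornology.IsBounded Ω) (hΩop : IsOpen Ω)
    (ε k : ℝ) (hε : 0 < ε) (hk0 : 0 < k) (hk : k ≤ 2 * ε ^ 2)
    (w : EuclideanSpace ℝ (Fin d) → ℝ) (hw : ContDiff ℝ 1 w)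
    (E : (EuclideanSpace ℝ (Fin d) → ℝ) → ℝ)
    (hE : ∀ u, E u =
      1 / 2 * (∫ x in Ω, ‖(1 / 2 : ℝ) • (gradient u x + gradient w x)‖ ^ 2)
      + 1 / (4 * k) * (∫ x in Ω, (u x - w x) ^ 2)
      + 1 / (4 * ε ^ 2) * (∫ x in Ω,
          (1 / 4 * ((u x) ^ 2 - 1) ^ 2 + ((w x) ^ 3 - w x) * u x)))
    (u₁ u₂ : EuclideanSpace ℝ (Fin d) → ℝ)
    (hu₁ : ContDiff ℝ 1 u₁) (hu₂ : ContDiff ℝ 1 u₂)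
    (hne : ¬ Set.EqOn u₁ u₂ Ω)
    (t : ℝ) (ht : t ∈ Set.Ioo (0 : ℝ) 1) :
    E (fun x => t * u₁ x + (1 - t) * u₂ x) < t * E u₁ + (1 - t) * E u₂ := by
  obtain ⟨ht0, ht1⟩ := ht
  have hm : ContDiff ℝ 1 fun x => t * u₁ x + (1 - t) * u₂ x :=
    (contDiff_const.mul hu₁).add (contDiff_const.mul hu₂)
  have hdiff₁ := hu₁.differentiable one_ne_zero
  have hdiff₂ := hu₂.differentiable one_ne_zero
  obtain ⟨x₀, hx₀, hne₀⟩ : ∃ x ∈ Ω, u₁ x ≠ u₂ x := by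
    simpa [Set.EqOn] using hne
  simp only [hE, ← setIntegral_cnEnergyDensity hΩbd k ε hw hu₁,
    ← setIntegral_cnEnergyDensity hΩbd k ε hw hu₂, ← setIntegral_cnEnergyDensity hΩbd k ε hw hm]
  refine setIntegral_lt_convexComb_of_le_of_lt_on_open
    ((continuous_cnEnergyDensity k ε hw hm).integrableOn_of_isBounded hΩbd)
    ((continuous_cnEnergyDensity k ε hw hu₁).integrableOn_of_isBounded hΩbd)
    ((continuous_cnEnergyDensity k ε hw hu₂).integrableOn_of_isBounded hΩbd)
    (fun x _ => cnEnergyDensity_convexComb_le hε hk0 hk w hdiff₁ hdiff₂ ht0.le ht1.le x)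
    hΩop (isOpen_ne_fun hu₁.continuous hu₂.continuous) ⟨x₀, hx₀, hne₀⟩
    fun x hx => cnEnergyDensity_convexComb_lt hε hk0 hk w hdiff₁ hdiff₂ ht0 ht1 hx.2

/-- Convexity part of Theorem 4.1: the standard Crank–Nicolson discrete energy for
the Allen–Cahn equation is strictly convex when `0 < k ≤ 2ε²`. -/
theorem stmt_13 (d : ℕ) (hd : 1 ≤ d)
    (Ω : Set (EuclideanSpace ℝ (Fin d))) (hΩne : Ω.Nonempty)
    (hΩbd : Bornology.IsBounded Ω) (hΩop : IsOpen Ω)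
    (ε k : ℝ) (hε : 0 < ε) (hk0 : 0 < k) (hk : k ≤ 2 * ε ^ 2)
    (w : EuclideanSpace ℝ (Fin d) → ℝ) (hw : ContDiff ℝ 1 w)
    (E : (EuclideanSpace ℝ (Fin d) → ℝ) → ℝ)
    (hE : ∀ u, E u =
      1 / 2 * (∫ x in Ω, ‖(1 / 2 : ℝ) • (gradient u x + gradient w x)‖ ^ 2)
      + 1 / (4 * k) * (∫ x in Ω, (u x - w x) ^ 2)
      + 1 / (4 * ε ^ 2) * (∫ x in Ω,
          (1 / 4 * ((u x) ^ 2 - 1) ^ 2 + ((w x) ^ 3 - w x) * u x)))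
    (u₁ u₂ : EuclideanSpace ℝ (Fin d) → ℝ)
    (hu₁ : ContDiff ℝ 1 u₁) (hu₂ : ContDiff ℝ 1 u₂)
    (hne : ¬ Set.EqOn u₁ u₂ Ω)
    (t : ℝ) (ht : t ∈ Set.Ioo (0 : ℝ) 1) :
    E (fun x => t * u₁ x + (1 - t) * u₂ x) < t * E u₁ + (1 - t) * E u₂ :=
  stmt_13_general d Ω hΩbd hΩop ε k hε hk0 hk w hw E hE u₁ u₂ hu₁ hu₂ hne t ht
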